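/- Suppose F is a Borel probability measure on [0,∞) satisfying tail assumption (T1) with index α ∈ (0,1). Define R_0(a,b) := ∫_a^b r(y) dy where r(x) := x·F((x−h,x])/F((x,∞)). Then the condition lim_{η→0⁺} limsup_{x→∞} (1/A(x)²) ∫_1^{ηx} (A(s)²/s²)·R_0(x−s,x) ds = 0 is equivalent to the condition lim_{η→0⁺} limsup_{x→∞} (x/A(x)) ∫_1^{ηx} (A(s)²/s²)·P(X ∈ (x−s, x]) ds = 0, where X is a random variable with law F. -/

import Mathlib

/-!
Write `G(x) = F((x, ∞))`. By (T1), `A(y) G(y) ∈ [1/2, 2]` for large `y`, so on `[x/2, x]` the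
ratio `r(y) = y F((y-h, y]) / G(y)` is comparable to `x A(x) F((y-h, y])`; the lower bound also uses
`A(2z) ≤ K A(z)`, which follows from regular variation. Integrating, `∫_a^b F((y-h, y]) dy` lies
between `h F((a, b-h])` and `h F((a-h, b])`, so `R₀(x-s, x)` is comparable to `h x A(x) F((x-s, x])`
once `s` is dilated by `1 + h` (resp. `1 + 2h`) and `x` is shifted by `h`. As `A` increases,
dilating `s` by `c ≥ 1` changes the weight `A(s)²/s²` by at most `c²`. So each of the two families
of functions of `(η, x)` is bounded by a constant multiple of the other at a proportional `η`, and
comparing their limsups transfers the vanishing as `η → 0⁺` in both directions.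
-/

open MeasureTheory ProbabilityTheory Filter Set Asymptotics Topology

/-- `t > 0` is an arithmetic support span of `F` (i.e. `F` is supported on `t·ℤ`). -/
def IsArithSpan (F : MeasureTheory.Measure ℝ) (t : ℝ) : Prop :=
  0 < t ∧ F ({x : ℝ | ∃ k : ℤ, x = t * k}ᶜ) = 0

/-- The ratio `r(x) = x · F((x−h, x]) / F((x, ∞))`. -/
noncomputable def rr (F : MeasureTheory.Measure ℝ) (h x : ℝ) : ℝ :=
  x * (F (Set.Ioc (x - h) x)).toReal / (F (Set.Ioi x)).toReal

/-- `R₀(a,b) = ∫_a^b r(y) dy`. -/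
noncomputable def R0 (F : MeasureTheory.Measure ℝ) (h a b : ℝ) : ℝ :=
  ∫ y in a..b, rr F h y

/-- Condition (★★):
`lim_{η→0⁺} limsup_{x→∞} (1/A(x)²) ∫_1^{ηx} (A(s)²/s²)·R₀(x−s,x) ds = 0`. -/
def CondStarStar (F : MeasureTheory.Measure ℝ) (A : ℝ → ℝ) (h : ℝ) : Prop :=
  Filter.Tendsto (fun η : ℝ =>
      Filter.limsup (fun x : ℝ =>
        1 / (A x) ^ 2 * ∫ s in (1:ℝ)..(η * x), (A s) ^ 2 / s ^ 2 * R0 F h (x - s) x)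
        Filter.atTop)
    (nhdsWithin 0 (Set.Ioi 0)) (nhds 0)

open scoped ENNReal

/-- `Real`'s `limsup` of a function unbounded above is the junk value `0`, matching `∞.toReal = 0`;
in `ℝ≥0∞` the limsups can be compared without boundedness side conditions. -/
lemma limsup_eq_toReal_limsup_ofReal {u : ℝ → ℝ} (hu : 0 ≤ᶠ[atTop] u) :
    limsup u atTop = (limsup (fun x => ENNReal.ofReal (u x)) atTop).toReal := by
  by_cases hbdd : IsBoundedUnder (· ≤ ·) atTop u
  · rw [← ENNReal.ofReal_limsup (isCoboundedUnder_le_of_eventually_le _ hu) hbdd,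
      ENNReal.toReal_ofReal (le_limsup_of_frequently_le hu.frequently hbdd)]
  · rw [Real.limsup_of_not_isBoundedUnder hbdd, eq_comm, ENNReal.toReal_eq_zero_iff]
    refine .inr (by_contra fun hne => hbdd ?_)
    refine ⟨(limsup (fun x => ENNReal.ofReal (u x)) atTop + 1).toReal, ?_⟩
    filter_upwards [eventually_lt_of_limsup_lt (ENNReal.lt_add_right hne one_ne_zero)] with x hx
    exact (ENNReal.ofReal_le_iff_le_toReal (by simpa using hne)).1 hx.le

lemma limsup_ofReal_le_mul_of_le_comp {u v τ : ℝ → ℝ} {C : ℝ} (hC : 0 ≤ C)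
    (hτ : Tendsto τ atTop atTop) (huv : ∀ᶠ x in atTop, u x ≤ C * v (τ x)) :
    limsup (fun x => ENNReal.ofReal (u x)) atTop
      ≤ ENNReal.ofReal C * limsup (fun x => ENNReal.ofReal (v x)) atTop := by
  calc limsup (fun x => ENNReal.ofReal (u x)) atTop
      ≤ limsup (fun x => ENNReal.ofReal C * ENNReal.ofReal (v (τ x))) atTop := by
        refine limsup_le_limsup (huv.mono fun x hx => ?_)
        simpa only [← ENNReal.ofReal_mul hC] using ENNReal.ofReal_le_ofReal hx
    _ = ENNReal.ofReal C * limsup (fun x => ENNReal.ofReal (v (τ x))) atTop :=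
        ENNReal.limsup_const_mul_of_ne_top ENNReal.ofReal_ne_top
    _ ≤ ENNReal.ofReal C * limsup (fun x => ENNReal.ofReal (v x)) atTop := by
        gcongr
        exact hτ.limsup_comp_le_limsup (u := fun x => ENNReal.ofReal (v x))

lemma tendsto_const_mul_nhdsGT_zero {a : ℝ} (ha : 0 < a) :
    Tendsto (fun η : ℝ => a * η) (𝓝[>] 0) (𝓝[>] 0) :=
  tendsto_nhdsWithin_of_tendsto_nhds_of_eventually_within _
    (by simpa using
      ((continuous_const_mul a).tendsto' 0 0 (mul_zero a)).mono_left nhdsWithin_le_nhds)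
    (eventually_nhdsWithin_of_forall fun _ hη => mul_pos ha hη)

/-- If `M ≡ ∞` near `0⁺` (so `M.toReal ≡ 0` is a junk limit), then `L ≡ ∞` as well; otherwise the
monotonicity of `M` makes it finite near `0⁺`, and the bound `L ≤ C M(a ·)` passes to `toReal`. -/
lemma tendsto_toReal_of_le_mul_comp {L M : ℝ → ℝ≥0∞} {C C' : ℝ≥0∞} {a a' ε : ℝ}
    (hC : C ≠ ∞) (hC' : C' ≠ ∞) (ha : 0 < a) (ha' : 0 < a') (hε : 0 < ε)
    (hM_mono : MonotoneOn M (Ioc 0 ε))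
    (hLM : ∀ᶠ η in 𝓝[>] 0, L η ≤ C * M (a * η))
    (hML : ∀ᶠ η in 𝓝[>] 0, M η ≤ C' * L (a' * η))
    (hM : Tendsto (fun η => (M η).toReal) (𝓝[>] 0) (𝓝 0)) :
    Tendsto (fun η => (L η).toReal) (𝓝[>] 0) (𝓝 0) := by
  by_cases hfin : ∃ η₀ ∈ Ioc 0 ε, M η₀ ≠ ∞
  · obtain ⟨η₀, hη₀, hMη₀⟩ := hfin
    have hMa : ∀ᶠ η in 𝓝[>] 0, M (a * η) ≠ ∞ := by
      filter_upwards [(tendsto_const_mul_nhdsGT_zero ha).eventually (Ioc_mem_nhdsGT hη₀.1)]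
        with η hη
      exact ne_top_of_le_ne_top hMη₀ (hM_mono ⟨hη.1, hη.2.trans hη₀.2⟩ hη₀ hη.2)
    refine squeeze_zero' (.of_forall fun _ => ENNReal.toReal_nonneg) ?_
      (by simpa using ((hM.comp (tendsto_const_mul_nhdsGT_zero ha)).const_mul C.toReal))
    filter_upwards [hLM, hMa] with η hLη hMη
    calc (L η).toReal ≤ (C * M (a * η)).toReal := ENNReal.toReal_mono (by finiteness) hLη
      _ = C.toReal * (M (a * η)).toReal := ENNReal.toReal_mul
  · push Not at hfin
    have hscale := tendsto_const_mul_nhdsGT_zero (inv_pos.2 ha')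
    refine tendsto_const_nhds.congr' ?_
    filter_upwards [hscale.eventually hML, hscale.eventually (Ioc_mem_nhdsGT hε)] with η hη hηε
    rw [hfin _ hηε, mul_inv_cancel_left₀ ha'.ne', top_le_iff, ENNReal.mul_eq_top] at hη
    simp [(hη.resolve_right fun h => hC' h.1).2]

lemma tendsto_limsup_of_le_mul_comp {Φ Ψ : ℝ → ℝ → ℝ} {τ τ' : ℝ → ℝ} {C C' a a' ε : ℝ}
    (hC : 0 ≤ C) (hC' : 0 ≤ C') (ha : 0 < a) (ha' : 0 < a') (hε : 0 < ε)
    (hτ : Tendsto τ atTop atTop) (hτ' : Tendsto τ' atTop atTop)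
    (hΦ : ∀ᶠ η in 𝓝[>] 0, 0 ≤ᶠ[atTop] Φ η) (hΨ : ∀ᶠ η in 𝓝[>] 0, 0 ≤ᶠ[atTop] Ψ η)
    (hΨ_mono : ∀ η₁ η₂, 0 < η₁ → η₁ ≤ η₂ → η₂ ≤ ε → Ψ η₁ ≤ᶠ[atTop] Ψ η₂)
    (hΦΨ : ∀ᶠ η in 𝓝[>] 0, ∀ᶠ x in atTop, Φ η x ≤ C * Ψ (a * η) (τ x))
    (hΨΦ : ∀ᶠ η in 𝓝[>] 0, ∀ᶠ x in atTop, Ψ η x ≤ C' * Φ (a' * η) (τ' x))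
    (hlim : Tendsto (fun η => limsup (Ψ η) atTop) (𝓝[>] 0) (𝓝 0)) :
    Tendsto (fun η => limsup (Φ η) atTop) (𝓝[>] 0) (𝓝 0) := by
  set L := fun η => limsup (fun x => ENNReal.ofReal (Φ η x)) atTop
  set M := fun η => limsup (fun x => ENNReal.ofReal (Ψ η x)) atTop
  have hM_mono : MonotoneOn M (Ioc 0 ε) := fun η₁ h₁ η₂ h₂ h12 =>
    limsup_le_limsup ((hΨ_mono η₁ η₂ h₁.1 h12 h₂.2).mono fun _ hx => ENNReal.ofReal_le_ofReal hx)
  refine (tendsto_toReal_of_le_mul_comp (L := L) (M := M) ENNReal.ofReal_ne_top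
    ENNReal.ofReal_ne_top ha ha' hε hM_mono
    (hΦΨ.mono fun _ => limsup_ofReal_le_mul_of_le_comp hC hτ)
    (hΨΦ.mono fun _ => limsup_ofReal_le_mul_of_le_comp hC' hτ')
    (hlim.congr' (hΨ.mono fun _ => limsup_eq_toReal_limsup_ofReal))).congr' ?_
  exact hΦ.mono fun _ hη => (limsup_eq_toReal_limsup_ofReal hη).symm

lemma intervalIntegral.integral_mono_on_of_nonneg {f g : ℝ → ℝ} {a b : ℝ} (hab : a ≤ b)
    (hf : ∀ x ∈ Icc a b, 0 ≤ f x) (hg : IntervalIntegrable g volume a b)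
    (hfg : ∀ x ∈ Icc a b, f x ≤ g x) : ∫ x in a..b, f x ≤ ∫ x in a..b, g x := by
  rw [intervalIntegral.integral_of_le hab, intervalIntegral.integral_of_le hab]
  exact integral_mono_of_nonneg
    (ae_restrict_of_forall_mem measurableSet_Ioc fun x hx => hf x (Ioc_subset_Icc_self hx))
    hg.1 (ae_restrict_of_forall_mem measurableSet_Ioc fun x hx => hfg x (Ioc_subset_Icc_self hx))

lemma Antitone.integral_le_sub_mul {f : ℝ → ℝ} (hf : Antitone f) {a b : ℝ} (hab : a ≤ b) :
    ∫ y in a..b, f y ≤ (b - a) * f a := by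
  simpa using intervalIntegral.integral_mono_on (μ := volume) hab hf.intervalIntegrable
    intervalIntegrable_const fun y hy => hf hy.1

lemma Antitone.sub_mul_le_integral {f : ℝ → ℝ} (hf : Antitone f) {a b : ℝ} (hab : a ≤ b) :
    (b - a) * f b ≤ ∫ y in a..b, f y := by
  simpa using intervalIntegral.integral_mono_on (μ := volume) hab intervalIntegrable_const
    hf.intervalIntegrable fun y hy => hf hy.2

lemma eventually_le_add_one_mul_of_tendsto_div {f g : ℝ → ℝ} {c : ℝ}
    (hg : ∀ᶠ x in atTop, 0 < g x) (hfg : Tendsto (fun x => f x / g x) atTop (𝓝 c)) :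
    ∀ᶠ x in atTop, f x ≤ (c + 1) * g x := by
  filter_upwards [hg, hfg.eventually (eventually_lt_nhds (lt_add_one c))] with x hgx hx
  exact ((div_lt_iff₀ hgx).1 hx).le

section Tail

variable {F : Measure ℝ} {A : ℝ → ℝ} {h : ℝ}

lemma eventually_mul_measureReal_Ioi_mem_Icc (hApos : ∀ x, 0 ≤ x → 0 < A x)
    (hT1 : (fun x : ℝ => (F (Ioi x)).toReal) ~[atTop] fun x : ℝ => 1 / A x) :
    ∀ᶠ x in atTop, A x * F.real (Ioi x) ∈ Icc (1 / 2) 2 := by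
  have hA : ∀ᶠ x in atTop, 0 < A x := (eventually_ge_atTop 0).mono hApos
  have hlim := (isEquivalent_iff_tendsto_one (hA.mono fun x hx => by positivity)).1 hT1
  filter_upwards [hlim.eventually (Icc_mem_nhds (a := 1 / 2) (b := 2) (by norm_num) (by norm_num)),
    hA] with x hx hAx
  simpa [div_div_eq_mul_div, mul_comm, measureReal_def] using hx

variable [IsFiniteMeasure F]

lemma antitone_measureReal_Ioi : Antitone fun x => F.real (Ioi x) :=
  fun _ _ hab => measureReal_mono (Ioi_subset_Ioi hab)

lemma measureReal_Ioc_eq_sub {a b : ℝ} (hab : a ≤ b) :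
    F.real (Ioc a b) = F.real (Ioi a) - F.real (Ioi b) := by
  rw [← Ioi_sdiff_Ioi, measureReal_sdiff (Ioi_subset_Ioi hab) measurableSet_Ioi]

lemma measureReal_Ioc_sub_self_eq (hh : 0 ≤ h) :
    (fun y => F.real (Ioc (y - h) y)) = fun y => F.real (Ioi (y - h)) - F.real (Ioi y) :=
  funext fun _ => measureReal_Ioc_eq_sub (by linarith)

lemma intervalIntegrable_measureReal_Ioc_sub_self (hh : 0 ≤ h) (a b : ℝ) :
    IntervalIntegrable (fun y => F.real (Ioc (y - h) y)) volume a b := by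
  rw [measureReal_Ioc_sub_self_eq hh]
  exact (antitone_measureReal_Ioi.comp_monotone fun _ _ hxy => sub_le_sub_right hxy h
    ).intervalIntegrable.sub antitone_measureReal_Ioi.intervalIntegrable

lemma monotone_measureReal_Ioc_sub (x : ℝ) : Monotone fun t => F.real (Ioc (x - t) x) :=
  fun _ _ hst => measureReal_mono (Ioc_subset_Ioc_left (by linarith))

lemma integral_measureReal_Ioc_sub_self (hh : 0 ≤ h) (a b : ℝ) :
    ∫ y in a..b, F.real (Ioc (y - h) y)
      = (∫ y in a - h..a, F.real (Ioi y)) - ∫ y in b - h..b, F.real (Ioi y) := by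
  have hG : ∀ c d : ℝ, IntervalIntegrable (fun y => F.real (Ioi y)) volume c d :=
    fun _ _ => antitone_measureReal_Ioi.intervalIntegrable
  rw [measureReal_Ioc_sub_self_eq hh, intervalIntegral.integral_sub
      (by simpa using (hG (a - h) (b - h)).comp_sub_right h) (hG a b),
    intervalIntegral.integral_comp_sub_right (fun y => F.real (Ioi y)),
    ← intervalIntegral.integral_add_adjacent_intervals (hG (a - h) a) (hG a (b - h)),
    ← intervalIntegral.integral_add_adjacent_intervals (hG a (b - h)) (hG (b - h) b)]
  ring

lemma integral_measureReal_Ioc_sub_self_le (hh : 0 ≤ h) {a b : ℝ} (hab : a ≤ b) :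
    ∫ y in a..b, F.real (Ioc (y - h) y) ≤ h * F.real (Ioc (a - h) b) := by
  have h₁ := (antitone_measureReal_Ioi (F := F)).integral_le_sub_mul (by linarith : a - h ≤ a)
  have h₂ := (antitone_measureReal_Ioi (F := F)).sub_mul_le_integral (by linarith : b - h ≤ b)
  rw [integral_measureReal_Ioc_sub_self hh, measureReal_Ioc_eq_sub (by linarith)]
  simp only [sub_sub_cancel] at h₁ h₂
  linarith

lemma le_integral_measureReal_Ioc_sub_self (hh : 0 ≤ h) {a b : ℝ} (hab : a ≤ b - h) :
    h * F.real (Ioc a (b - h)) ≤ ∫ y in a..b, F.real (Ioc (y - h) y) := by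
  have h₁ := (antitone_measureReal_Ioi (F := F)).sub_mul_le_integral (by linarith : a - h ≤ a)
  have h₂ := (antitone_measureReal_Ioi (F := F)).integral_le_sub_mul (by linarith : b - h ≤ b)
  rw [integral_measureReal_Ioc_sub_self hh, measureReal_Ioc_eq_sub hab]
  simp only [sub_sub_cancel] at h₁ h₂
  linarith

lemma measureReal_Ioi_pos (hAG : ∀ᶠ x in atTop, A x * F.real (Ioi x) ∈ Icc (1 / 2) 2) (x : ℝ) :
    0 < F.real (Ioi x) := by
  obtain ⟨y, hy, hxy⟩ := (hAG.and (eventually_ge_atTop x)).exists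
  refine lt_of_lt_of_le ?_ (antitone_measureReal_Ioi hxy)
  refine lt_of_le_of_ne measureReal_nonneg fun h0 => ?_
  norm_num [← h0] at hy

end Tail

section Ratio

variable {F : Measure ℝ} {A : ℝ → ℝ} {h y : ℝ}

lemma rr_eq : rr F h y = y * F.real (Ioc (y - h) y) / F.real (Ioi y) := rfl

lemma rr_nonneg (hy : 0 ≤ y) : 0 ≤ rr F h y :=
  div_nonneg (mul_nonneg hy measureReal_nonneg) measureReal_nonneg

lemma measureReal_Ioi_pos_of_mem_Icc (hAG : A y * F.real (Ioi y) ∈ Icc (1 / 2) 2) :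
    0 < F.real (Ioi y) :=
  measureReal_nonneg.lt_of_ne fun h0 => by norm_num [← h0] at hAG

lemma rr_le_of_mem_Icc (hy : 0 ≤ y) (hAG : A y * F.real (Ioi y) ∈ Icc (1 / 2) 2) :
    rr F h y ≤ 2 * y * A y * F.real (Ioc (y - h) y) := by
  rw [rr_eq, div_le_iff₀ (measureReal_Ioi_pos_of_mem_Icc hAG)]
  have hP : 0 ≤ y * F.real (Ioc (y - h) y) := mul_nonneg hy measureReal_nonneg
  nlinarith [hAG.1]

lemma le_rr_of_mem_Icc (hy : 0 ≤ y) (hAG : A y * F.real (Ioi y) ∈ Icc (1 / 2) 2) :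
    y * A y * F.real (Ioc (y - h) y) / 2 ≤ rr F h y := by
  rw [rr_eq, le_div_iff₀ (measureReal_Ioi_pos_of_mem_Icc hAG)]
  have hP : 0 ≤ y * F.real (Ioc (y - h) y) := mul_nonneg hy measureReal_nonneg
  nlinarith [hAG.2]

lemma R0_nonneg {a b : ℝ} (ha : 0 ≤ a) (hab : a ≤ b) : 0 ≤ R0 F h a b :=
  intervalIntegral.integral_nonneg hab fun _ hy => rr_nonneg (ha.trans hy.1)

lemma monotoneOn_R0_sub (hrr : ∀ a b, IntervalIntegrable (rr F h) volume a b) (x : ℝ) :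
    MonotoneOn (fun t => R0 F h (x - t) x) (Icc 0 x) := by
  intro t₁ _ t₂ ht₂ h12
  have hmid : 0 ≤ ∫ y in x - t₂..x - t₁, rr F h y :=
    intervalIntegral.integral_nonneg (by linarith) fun y hy => rr_nonneg (by linarith [hy.1, ht₂.2])
  simp only [R0]
  rw [← intervalIntegral.integral_add_adjacent_intervals (hrr (x - t₂) (x - t₁)) (hrr (x - t₁) x)]
  linarith

variable [IsFiniteMeasure F]

lemma measurable_rr (hh : 0 ≤ h) : Measurable (rr F h) := by
  have hG : Measurable fun y => F.real (Ioi y) := antitone_measureReal_Ioi.measurable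
  have hP : Measurable fun y => F.real (Ioc (y - h) y) := by
    rw [measureReal_Ioc_sub_self_eq hh]
    exact (hG.comp (measurable_sub_const h)).sub hG
  exact (measurable_id.mul hP).div hG

lemma intervalIntegrable_rr (hh : 0 ≤ h) (hG : ∀ y, 0 < F.real (Ioi y)) (a b : ℝ) :
    IntervalIntegrable (rr F h) volume a b := by
  wlog hab : a ≤ b generalizing a b
  · exact (this b a (le_of_not_ge hab)).symm
  refine (intervalIntegrable_const (c := (|a| + |b|) * F.real univ / F.real (Ioi b))).mono_fun'
    (measurable_rr hh).aestronglyMeasurable ?_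
  rw [uIoc_of_le hab]
  refine ae_restrict_of_forall_mem measurableSet_Ioc fun y hy => ?_
  have hy_abs : |y| ≤ |a| + |b| := abs_le.2
    ⟨by linarith [neg_abs_le a, abs_nonneg b, hy.1],
      by linarith [le_abs_self b, abs_nonneg a, hy.2]⟩
  change ‖rr F h y‖ ≤ (|a| + |b|) * F.real univ / F.real (Ioi b)
  rw [Real.norm_eq_abs, rr_eq, abs_div, abs_mul, abs_of_nonneg measureReal_nonneg,
    abs_of_pos (hG y)]
  exact div_le_div₀ (by positivity)
    (mul_le_mul hy_abs (measureReal_mono (subset_univ _)) measureReal_nonneg (by positivity))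
    (hG b) (antitone_measureReal_Ioi hy.2)

lemma R0_le_of_rr_le (hh : 0 ≤ h) {a b c : ℝ} (ha : 0 ≤ a) (hab : a ≤ b) (hc : 0 ≤ c)
    (hrc : ∀ y ∈ Icc a b, rr F h y ≤ c * F.real (Ioc (y - h) y)) :
    R0 F h a b ≤ c * h * F.real (Ioc (a - h) b) := by
  calc R0 F h a b ≤ ∫ y in a..b, c * F.real (Ioc (y - h) y) :=
        intervalIntegral.integral_mono_on_of_nonneg hab (fun y hy => rr_nonneg (ha.trans hy.1))
          ((intervalIntegrable_measureReal_Ioc_sub_self hh a b).const_mul c) hrc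
    _ = c * ∫ y in a..b, F.real (Ioc (y - h) y) := intervalIntegral.integral_const_mul c _
    _ ≤ c * (h * F.real (Ioc (a - h) b)) :=
        mul_le_mul_of_nonneg_left (integral_measureReal_Ioc_sub_self_le hh hab) hc
    _ = c * h * F.real (Ioc (a - h) b) := by ring

lemma le_R0_of_le_rr (hh : 0 ≤ h) {a b c : ℝ} (hab : a ≤ b - h) (hc : 0 ≤ c)
    (hrr : IntervalIntegrable (rr F h) volume a b)
    (hrc : ∀ y ∈ Icc a b, c * F.real (Ioc (y - h) y) ≤ rr F h y) :
    c * h * F.real (Ioc a (b - h)) ≤ R0 F h a b := by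
  calc c * h * F.real (Ioc a (b - h)) = c * (h * F.real (Ioc a (b - h))) := by ring
    _ ≤ c * ∫ y in a..b, F.real (Ioc (y - h) y) :=
        mul_le_mul_of_nonneg_left (le_integral_measureReal_Ioc_sub_self hh hab) hc
    _ = ∫ y in a..b, c * F.real (Ioc (y - h) y) := (intervalIntegral.integral_const_mul c _).symm
    _ ≤ R0 F h a b := intervalIntegral.integral_mono_on_of_nonneg (by linarith)
        (fun _ _ => mul_nonneg hc measureReal_nonneg) hrr hrc

end Ratio

section Pointwise

variable {F : Measure ℝ} {A : ℝ → ℝ} {h : ℝ}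

lemma eventually_rr_le (hApos : ∀ x, 0 ≤ x → 0 < A x) (hAmono : MonotoneOn A (Ici 0))
    (hAG : ∀ᶠ y in atTop, A y * F.real (Ioi y) ∈ Icc (1 / 2) 2) :
    ∀ᶠ x in atTop, ∀ y ∈ Icc (x / 2) x, rr F h y ≤ 2 * x * A x * F.real (Ioc (y - h) y) := by
  obtain ⟨Y, hY⟩ := eventually_atTop.1 hAG
  filter_upwards [eventually_ge_atTop (2 * max Y 0)] with x hx y hy
  have hYy : max Y 0 ≤ y := by linarith [hy.1]
  have hy0 : 0 ≤ y := le_of_max_le_right hYy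
  have hAy := hApos y hy0
  calc rr F h y ≤ 2 * y * A y * F.real (Ioc (y - h) y) :=
        rr_le_of_mem_Icc hy0 (hY y (le_of_max_le_left hYy))
    _ ≤ 2 * x * A x * F.real (Ioc (y - h) y) :=
        mul_le_mul_of_nonneg_right (mul_le_mul (by linarith [hy.2])
          (hAmono hy0 (hy0.trans hy.2) hy.2) hAy.le (by linarith [hy.2])) measureReal_nonneg

lemma eventually_le_rr (hApos : ∀ x, 0 ≤ x → 0 < A x) (hAmono : MonotoneOn A (Ici 0))
    (hAG : ∀ᶠ y in atTop, A y * F.real (Ioi y) ∈ Icc (1 / 2) 2) {K : ℝ} (hK : 0 < K)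
    (hdouble : ∀ᶠ x in atTop, A (2 * x) ≤ K * A x) :
    ∀ᶠ x in atTop, ∀ y ∈ Icc (x / 2) x, x * A x / (4 * K) * F.real (Ioc (y - h) y) ≤ rr F h y := by
  obtain ⟨Y, hY⟩ := eventually_atTop.1 (hAG.and hdouble)
  filter_upwards [eventually_ge_atTop (2 * max Y 0)] with x hx y hy
  have hYy : max Y 0 ≤ y := by linarith [hy.1]
  have hy0 : 0 ≤ y := le_of_max_le_right hYy
  have hAy := hApos y hy0
  have hAx : A x ≤ K * A y := by
    have hhalf := (hY (x / 2) (by linarith [le_max_left Y 0])).2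
    rw [mul_div_cancel₀ _ two_ne_zero] at hhalf
    exact hhalf.trans (mul_le_mul_of_nonneg_left
      (hAmono (by simp; linarith [le_max_right Y 0]) (by simpa using hy0) hy.1) hK.le)
  have hxy : x * A x / (4 * K) ≤ y * A y / 2 := by
    have := mul_le_mul (show x ≤ 2 * y by linarith [hy.1]) hAx
      (hApos x (by linarith [hy.2])).le (by linarith)
    rw [div_le_iff₀ (by positivity)]
    linarith
  calc x * A x / (4 * K) * F.real (Ioc (y - h) y)
      ≤ y * A y / 2 * F.real (Ioc (y - h) y) := mul_le_mul_of_nonneg_right hxy measureReal_nonneg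
    _ = y * A y * F.real (Ioc (y - h) y) / 2 := by ring
    _ ≤ rr F h y := le_rr_of_mem_Icc hy0 (hY y (le_of_max_le_left hYy)).1

lemma eventually_div_le_mul_div_add (hh : 0 ≤ h) (hApos : ∀ x, 0 ≤ x → 0 < A x)
    (hAmono : MonotoneOn A (Ici 0)) {K : ℝ} (hdouble : ∀ᶠ x in atTop, A (2 * x) ≤ K * A x) :
    ∀ᶠ x in atTop, x / A x ≤ K * ((x + h) / A (x + h)) := by
  filter_upwards [hdouble, eventually_ge_atTop h] with x hdx hxh
  have hAx := hApos x (hh.trans hxh)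
  have hAxh := hApos (x + h) (by linarith)
  have hA : A (x + h) ≤ K * A x :=
    (hAmono (by simp; linarith) (by simp; linarith) (by linarith : x + h ≤ 2 * x)).trans hdx
  rw [mul_div_assoc', div_le_div_iff₀ hAx hAxh]
  nlinarith

variable [IsFiniteMeasure F]

lemma eventually_R0_sub_le (hh : 0 ≤ h) (hApos : ∀ x, 0 ≤ x → 0 < A x)
    (hAmono : MonotoneOn A (Ici 0))
    (hAG : ∀ᶠ y in atTop, A y * F.real (Ioi y) ∈ Icc (1 / 2) 2) :
    ∀ᶠ x in atTop, ∀ s ∈ Icc 1 (x / 2),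
      R0 F h (x - s) x ≤ 2 * x * A x * h * F.real (Ioc (x - (1 + h) * s) x) := by
  filter_upwards [eventually_rr_le hApos hAmono hAG, eventually_ge_atTop 0] with x hrr hx0 s hs
  have hAx := hApos x hx0
  calc R0 F h (x - s) x ≤ 2 * x * A x * h * F.real (Ioc (x - s - h) x) :=
        R0_le_of_rr_le hh (by linarith [hs.2]) (by linarith [hs.1]) (by positivity)
          fun y hy => hrr y ⟨by linarith [hy.1, hs.2], hy.2⟩
    _ ≤ 2 * x * A x * h * F.real (Ioc (x - (1 + h) * s) x) :=
        mul_le_mul_of_nonneg_left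
          (measureReal_mono (Ioc_subset_Ioc_left (by nlinarith [hs.1]))) (by positivity)

lemma eventually_measureReal_Ioc_le_R0 (hh : 0 < h) (hApos : ∀ x, 0 ≤ x → 0 < A x)
    (hAmono : MonotoneOn A (Ici 0))
    (hAG : ∀ᶠ y in atTop, A y * F.real (Ioi y) ∈ Icc (1 / 2) 2)
    (hrr : ∀ a b, IntervalIntegrable (rr F h) volume a b) {K : ℝ} (hK : 0 < K)
    (hdouble : ∀ᶠ x in atTop, A (2 * x) ≤ K * A x) :
    ∀ᶠ x in atTop, ∀ s ∈ Icc 1 (x / (4 * (1 + 2 * h))), F.real (Ioc (x - s) x)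
      ≤ 4 * K / (h * (x + h) * A (x + h)) * R0 F h (x + h - (1 + 2 * h) * s) (x + h) := by
  have hshift : Tendsto (fun x : ℝ => x + h) atTop atTop :=
    tendsto_atTop_add_const_right _ h tendsto_id
  filter_upwards [hshift.eventually (eventually_le_rr (h := h) hApos hAmono hAG hK hdouble),
    eventually_ge_atTop (6 * h)] with x hle hx s hs
  have hs4 : (1 + 2 * h) * s ≤ x / 4 := by
    have := hs.2
    rw [le_div_iff₀ (by positivity)] at this
    linarith
  have hs' : s ≤ (1 + 2 * h) * s := by nlinarith [hs.1]
  have hAxh := hApos (x + h) (by linarith)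
  have hx₀ : 0 < x + h := by linarith
  have hxh : 0 < h * (x + h) * A (x + h) := by positivity
  rw [div_mul_eq_mul_div, le_div_iff₀' hxh]
  calc h * (x + h) * A (x + h) * F.real (Ioc (x - s) x)
      = 4 * K * ((x + h) * A (x + h) / (4 * K) * h * F.real (Ioc (x - s) x)) := by field_simp
    _ ≤ 4 * K * ((x + h) * A (x + h) / (4 * K) * h * F.real (Ioc (x - s - h) x)) :=
        mul_le_mul_of_nonneg_left (mul_le_mul_of_nonneg_left
          (measureReal_mono (Ioc_subset_Ioc_left (by linarith))) (by positivity)) (by positivity)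
    _ ≤ 4 * K * R0 F h (x + h - (s + 2 * h)) (x + h) := by
        rw [show x + h - (s + 2 * h) = x - s - h by ring]
        gcongr
        simpa using le_R0_of_le_rr hh.le (a := x - s - h) (b := x + h) (by linarith [hs.1])
          (by positivity) (hrr _ _) fun y hy => hle y ⟨by linarith [hy.1], hy.2⟩
    _ ≤ 4 * K * R0 F h (x + h - (1 + 2 * h) * s) (x + h) := by
        gcongr
        exact monotoneOn_R0_sub hrr (x + h) ⟨by linarith [hs.1], by linarith⟩
          ⟨by linarith [hs.1], by linarith⟩ (by nlinarith [hs.1])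

end Pointwise

section Weighted

variable {A : ℝ → ℝ}

lemma intervalIntegrable_sq_div_sq_mul (hAcont : ContinuousOn A (Ici 0)) {q : ℝ → ℝ} {a b : ℝ}
    (ha : 0 < a) (hab : a ≤ b) (hq : MonotoneOn q (Icc a b)) :
    IntervalIntegrable (fun t => A t ^ 2 / t ^ 2 * q t) volume a b := by
  rw [← uIcc_of_le hab] at hq
  refine hq.intervalIntegrable.continuousOn_mul ?_
  rw [uIcc_of_le hab]
  exact ((hAcont.mono fun t ht => ha.le.trans ht.1).pow 2).div (continuousOn_id.pow 2)
    fun t ht => pow_ne_zero 2 (ha.trans_le ht.1).ne'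

lemma integral_sq_div_sq_mul_mono (hAcont : ContinuousOn A (Ici 0)) {q : ℝ → ℝ} {T₁ T₂ : ℝ}
    (hT₁ : 1 ≤ T₁) (hT₁₂ : T₁ ≤ T₂) (hq : MonotoneOn q (Icc 1 T₂))
    (hq₀ : ∀ t ∈ Icc 1 T₂, 0 ≤ q t) :
    ∫ t in (1 : ℝ)..T₁, A t ^ 2 / t ^ 2 * q t ≤ ∫ t in (1 : ℝ)..T₂, A t ^ 2 / t ^ 2 * q t :=
  intervalIntegral.integral_mono_interval le_rfl hT₁ hT₁₂
    (ae_restrict_of_forall_mem measurableSet_Ioc fun t ht =>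
      mul_nonneg (by positivity) (hq₀ t (Ioc_subset_Icc_self ht)))
    (intervalIntegrable_sq_div_sq_mul hAcont one_pos (hT₁.trans hT₁₂) hq)

/-- Substituting `t = c s` costs a factor `c⁻¹`, and since `A` is increasing the weight
`A(t/c)² / (t/c)²` is at most `c²` times `A(t)² / t²`. -/
lemma integral_sq_div_sq_mul_comp_mul_le (hApos : ∀ x, 0 ≤ x → 0 < A x)
    (hAmono : MonotoneOn A (Ici 0)) {q : ℝ → ℝ} {c T : ℝ} (hc : 1 ≤ c) (hT : 1 ≤ T)
    (hq₀ : ∀ t ∈ Icc 1 (c * T), 0 ≤ q t)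
    (hq : IntervalIntegrable (fun t => A t ^ 2 / t ^ 2 * q t) volume 1 (c * T)) :
    ∫ s in (1 : ℝ)..T, A s ^ 2 / s ^ 2 * q (c * s)
      ≤ c * ∫ t in (1 : ℝ)..c * T, A t ^ 2 / t ^ 2 * q t := by
  have hc0 : 0 < c := one_pos.trans_le hc
  have hcT : c ≤ c * T := le_mul_of_one_le_right hc0.le hT
  have hsubst : ∫ s in (1 : ℝ)..T, A s ^ 2 / s ^ 2 * q (c * s)
      = c⁻¹ * ∫ t in c..c * T, A (t / c) ^ 2 / (t / c) ^ 2 * q t := by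
    have := intervalIntegral.integral_comp_mul_left (a := 1) (b := T)
      (fun t => A (t / c) ^ 2 / (t / c) ^ 2 * q t) hc0.ne'
    simpa only [mul_div_cancel_left₀ _ hc0.ne', mul_one, smul_eq_mul] using this
  have hweight : ∀ t ∈ Icc c (c * T),
      A (t / c) ^ 2 / (t / c) ^ 2 * q t ≤ c ^ 2 * (A t ^ 2 / t ^ 2 * q t) := by
    intro t ht
    have ht0 : 0 < t := hc0.trans_le ht.1
    have hA : A (t / c) ≤ A t := hAmono (by simp; positivity) (by simp; positivity)
      (div_le_self ht0.le hc)
    have hq₀t := hq₀ t ⟨hc.trans ht.1, ht.2⟩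
    have hsq : A (t / c) ^ 2 ≤ A t ^ 2 := pow_le_pow_left₀ (hApos _ (by positivity)).le hA 2
    rw [div_pow, div_div_eq_mul_div, ← mul_assoc, mul_div_assoc', mul_comm (c ^ 2)]
    gcongr
  calc ∫ s in (1 : ℝ)..T, A s ^ 2 / s ^ 2 * q (c * s)
      = c⁻¹ * ∫ t in c..c * T, A (t / c) ^ 2 / (t / c) ^ 2 * q t := hsubst
    _ ≤ c⁻¹ * ∫ t in c..c * T, c ^ 2 * (A t ^ 2 / t ^ 2 * q t) := by
        gcongr
        refine intervalIntegral.integral_mono_on_of_nonneg hcT (fun t ht => ?_)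
          ((hq.mono_set ?_).const_mul _) hweight
        · exact mul_nonneg (by positivity) (hq₀ t ⟨hc.trans ht.1, ht.2⟩)
        · rw [uIcc_of_le hcT, uIcc_of_le (hc.trans hcT)]
          exact Icc_subset_Icc_left hc
    _ = c * ∫ t in c..c * T, A t ^ 2 / t ^ 2 * q t := by
        rw [intervalIntegral.integral_const_mul]
        field_simp
    _ ≤ c * ∫ t in (1 : ℝ)..c * T, A t ^ 2 / t ^ 2 * q t := by
        gcongr
        exact intervalIntegral.integral_mono_interval hc hcT le_rfl
          (ae_restrict_of_forall_mem measurableSet_Ioc fun t ht =>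
            mul_nonneg (by positivity) (hq₀ t (Ioc_subset_Icc_self ht))) hq

lemma integral_sq_div_sq_mul_le_of_le_comp_mul (hApos : ∀ x, 0 ≤ x → 0 < A x)
    (hAmono : MonotoneOn A (Ici 0)) (hAcont : ContinuousOn A (Ici 0)) {q₁ q₂ : ℝ → ℝ}
    {C c T T' : ℝ} (hC : 0 ≤ C) (hc : 1 ≤ c) (hT : 1 ≤ T) (hT' : c * T ≤ T')
    (hq₁ : ∀ s ∈ Icc 1 T, 0 ≤ q₁ s) (hq₂ : MonotoneOn q₂ (Icc 1 T'))
    (hq₂₀ : ∀ t ∈ Icc 1 T', 0 ≤ q₂ t) (hq : ∀ s ∈ Icc 1 T, q₁ s ≤ C * q₂ (c * s)) :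
    ∫ s in (1 : ℝ)..T, A s ^ 2 / s ^ 2 * q₁ s
      ≤ C * c * ∫ t in (1 : ℝ)..T', A t ^ 2 / t ^ 2 * q₂ t := by
  have hc0 : 0 ≤ c := zero_le_one.trans hc
  have hcT : 1 ≤ c * T := by nlinarith
  have hq₂c : MonotoneOn (fun s => q₂ (c * s)) (Icc 1 T) := fun s hs t ht hst =>
    hq₂ ⟨by nlinarith [hs.1], by nlinarith [hs.2]⟩ ⟨by nlinarith [ht.1], by nlinarith [ht.2]⟩
      (mul_le_mul_of_nonneg_left hst hc0)
  have hsub : Icc 1 (c * T) ⊆ Icc 1 T' := Icc_subset_Icc_right hT'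
  calc ∫ s in (1 : ℝ)..T, A s ^ 2 / s ^ 2 * q₁ s
      ≤ ∫ s in (1 : ℝ)..T, C * (A s ^ 2 / s ^ 2 * q₂ (c * s)) :=
        intervalIntegral.integral_mono_on_of_nonneg hT
          (fun s hs => mul_nonneg (by positivity) (hq₁ s hs))
          ((intervalIntegrable_sq_div_sq_mul hAcont one_pos hT hq₂c).const_mul C) fun s hs => by
            rw [mul_left_comm]
            exact mul_le_mul_of_nonneg_left (hq s hs) (by positivity)
    _ = C * ∫ s in (1 : ℝ)..T, A s ^ 2 / s ^ 2 * q₂ (c * s) :=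
        intervalIntegral.integral_const_mul _ _
    _ ≤ C * (c * ∫ t in (1 : ℝ)..c * T, A t ^ 2 / t ^ 2 * q₂ t) := by
        gcongr
        exact integral_sq_div_sq_mul_comp_mul_le hApos hAmono hc hT
          (fun t ht => hq₂₀ t (hsub ht))
          (intervalIntegrable_sq_div_sq_mul hAcont one_pos hcT (hq₂.mono hsub))
    _ ≤ C * (c * ∫ t in (1 : ℝ)..T', A t ^ 2 / t ^ 2 * q₂ t) := by
        gcongr
        exact integral_sq_div_sq_mul_mono hAcont hcT hT' hq₂ hq₂₀
    _ = C * c * ∫ t in (1 : ℝ)..T', A t ^ 2 / t ^ 2 * q₂ t := by ring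

noncomputable def starStarTerm (F : Measure ℝ) (A : ℝ → ℝ) (h η x : ℝ) : ℝ :=
  1 / A x ^ 2 * ∫ s in (1 : ℝ)..η * x, A s ^ 2 / s ^ 2 * R0 F h (x - s) x

noncomputable def probTerm (F : Measure ℝ) (A : ℝ → ℝ) (η x : ℝ) : ℝ :=
  x / A x * ∫ s in (1 : ℝ)..η * x, A s ^ 2 / s ^ 2 * F.real (Ioc (x - s) x)

section Terms

variable {F : Measure ℝ} {A : ℝ → ℝ} {h : ℝ}

lemma eventually_starStarTerm_nonneg :
    ∀ᶠ η in 𝓝[>] 0, 0 ≤ᶠ[atTop] starStarTerm F A h η := by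
  filter_upwards [Ioc_mem_nhdsGT one_pos] with η hη
  filter_upwards [eventually_ge_atTop (1 / η), eventually_ge_atTop 0] with x hx hx0
  have hT : 1 ≤ η * x := (div_le_iff₀' hη.1).1 hx
  refine mul_nonneg (by positivity) (intervalIntegral.integral_nonneg hT fun s hs => ?_)
  exact mul_nonneg (by positivity) (R0_nonneg (by nlinarith [hs.2, hη.2]) (by linarith [hs.1]))

lemma starStarTerm_mono (hAcont : ContinuousOn A (Ici 0))
    (hrr : ∀ a b, IntervalIntegrable (rr F h) volume a b) {η₁ η₂ : ℝ} (hη₁ : 0 < η₁)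
    (hη₁₂ : η₁ ≤ η₂) (hη₂ : η₂ ≤ 1) :
    starStarTerm F A h η₁ ≤ᶠ[atTop] starStarTerm F A h η₂ := by
  filter_upwards [eventually_ge_atTop (1 / η₁), eventually_ge_atTop 0] with x hx hx0
  have hT : 1 ≤ η₁ * x := (div_le_iff₀' hη₁).1 hx
  have hTx : η₂ * x ≤ x := by nlinarith
  exact mul_le_mul_of_nonneg_left (integral_sq_div_sq_mul_mono hAcont hT (by nlinarith)
    ((monotoneOn_R0_sub hrr x).mono (Icc_subset_Icc zero_le_one hTx))
    fun t ht => R0_nonneg (by linarith [ht.2]) (by linarith [ht.1])) (by positivity)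

lemma eventually_probTerm_nonneg (hApos : ∀ x, 0 ≤ x → 0 < A x) :
    ∀ᶠ η in 𝓝[>] 0, 0 ≤ᶠ[atTop] probTerm F A η := by
  filter_upwards [self_mem_nhdsWithin] with η (hη : 0 < η)
  filter_upwards [eventually_ge_atTop (1 / η), eventually_ge_atTop 0] with x hx hx0
  have hT : 1 ≤ η * x := (div_le_iff₀' hη).1 hx
  exact mul_nonneg (div_nonneg hx0 (hApos x hx0).le) (intervalIntegral.integral_nonneg hT
    fun s _ => mul_nonneg (by positivity) measureReal_nonneg)

variable [IsFiniteMeasure F]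

lemma probTerm_mono (hApos : ∀ x, 0 ≤ x → 0 < A x) (hAcont : ContinuousOn A (Ici 0))
    {η₁ η₂ : ℝ} (hη₁ : 0 < η₁) (hη₁₂ : η₁ ≤ η₂) :
    probTerm F A η₁ ≤ᶠ[atTop] probTerm F A η₂ := by
  filter_upwards [eventually_ge_atTop (1 / η₁), eventually_ge_atTop 0] with x hx hx0
  have hT : 1 ≤ η₁ * x := (div_le_iff₀' hη₁).1 hx
  exact mul_le_mul_of_nonneg_left (integral_sq_div_sq_mul_mono hAcont hT (by nlinarith)
    ((monotone_measureReal_Ioc_sub x).monotoneOn _) fun _ _ => measureReal_nonneg)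
    (div_nonneg hx0 (hApos x hx0).le)

lemma eventually_starStarTerm_le_probTerm (hh : 0 ≤ h) (hApos : ∀ x, 0 ≤ x → 0 < A x)
    (hAmono : MonotoneOn A (Ici 0)) (hAcont : ContinuousOn A (Ici 0))
    (hAG : ∀ᶠ y in atTop, A y * F.real (Ioi y) ∈ Icc (1 / 2) 2) :
    ∀ᶠ η in 𝓝[>] 0, ∀ᶠ x in atTop,
      starStarTerm F A h η x ≤ 2 * h * (1 + h) * probTerm F A ((1 + h) * η) x := by
  filter_upwards [Ioc_mem_nhdsGT one_half_pos] with η hη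
  filter_upwards [eventually_R0_sub_le hh hApos hAmono hAG, eventually_ge_atTop (1 / η),
    eventually_ge_atTop 0] with x hR0 hx hx0
  have hT : 1 ≤ η * x := (div_le_iff₀' hη.1).1 hx
  have hTx : η * x ≤ x / 2 := by nlinarith [hη.2]
  have hAx := hApos x hx0
  have hI := integral_sq_div_sq_mul_le_of_le_comp_mul hApos hAmono hAcont
    (q₂ := fun t => F.real (Ioc (x - t) x)) (by positivity) (by linarith : 1 ≤ 1 + h) hT
    (mul_assoc (1 + h) η x).ge (fun s hs => R0_nonneg (by linarith [hs.2]) (by linarith [hs.1]))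
    ((monotone_measureReal_Ioc_sub x).monotoneOn _) (fun _ _ => measureReal_nonneg)
    fun s hs => hR0 s ⟨hs.1, hs.2.trans hTx⟩
  calc starStarTerm F A h η x
      = 1 / A x ^ 2 * ∫ s in (1 : ℝ)..η * x, A s ^ 2 / s ^ 2 * R0 F h (x - s) x := rfl
    _ ≤ 1 / A x ^ 2 * (2 * x * A x * h * (1 + h) * ∫ t in (1 : ℝ)..(1 + h) * η * x,
          A t ^ 2 / t ^ 2 * F.real (Ioc (x - t) x)) := by gcongr
    _ = 2 * h * (1 + h) * probTerm F A ((1 + h) * η) x := by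
        rw [probTerm]
        field_simp

lemma eventually_probTerm_le_starStarTerm (hh : 0 < h) (hApos : ∀ x, 0 ≤ x → 0 < A x)
    (hAmono : MonotoneOn A (Ici 0)) (hAcont : ContinuousOn A (Ici 0))
    (hAG : ∀ᶠ y in atTop, A y * F.real (Ioi y) ∈ Icc (1 / 2) 2)
    (hrr : ∀ a b, IntervalIntegrable (rr F h) volume a b) {K : ℝ} (hK : 0 < K)
    (hdouble : ∀ᶠ x in atTop, A (2 * x) ≤ K * A x) :
    ∀ᶠ η in 𝓝[>] 0, ∀ᶠ x in atTop, probTerm F A η x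
      ≤ 4 * K ^ 2 * (1 + 2 * h) / h * starStarTerm F A h ((1 + 2 * h) * η) (x + h) := by
  have hc : 0 < 4 * (1 + 2 * h) := by positivity
  filter_upwards [Ioc_mem_nhdsGT (one_div_pos.2 hc)] with η hη
  filter_upwards [eventually_measureReal_Ioc_le_R0 hh hApos hAmono hAG hrr hK hdouble,
    eventually_div_le_mul_div_add hh.le hApos hAmono hdouble, eventually_ge_atTop (1 / η),
    eventually_ge_atTop h] with x hP hratio hx hxh
  have hT : 1 ≤ η * x := (div_le_iff₀' hη.1).1 hx
  have hη₄ : η * (4 * (1 + 2 * h)) ≤ 1 := (le_div_iff₀ hc).1 hη.2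
  have hTx : η * x ≤ x / (4 * (1 + 2 * h)) := by
    rw [le_div_iff₀ hc]; nlinarith
  have hcT : (1 + 2 * h) * η * (x + h) ≤ x + h := by nlinarith
  have hR₀ : ∀ t ∈ Icc 1 ((1 + 2 * h) * η * (x + h)), 0 ≤ R0 F h (x + h - t) (x + h) :=
    fun t ht => R0_nonneg (by linarith [ht.2]) (by linarith [ht.1])
  have hx0 : 0 ≤ x := by linarith
  have hx₀ : 0 < x + h := by linarith
  have hAx := hApos x hx0
  have hAxh := hApos (x + h) hx₀.le
  have hI := integral_sq_div_sq_mul_le_of_le_comp_mul hApos hAmono hAcont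
    (q₂ := fun t => R0 F h (x + h - t) (x + h)) (by positivity) (by linarith) hT
    (by nlinarith [mul_pos (mul_pos (by positivity : (0 : ℝ) < 1 + 2 * h) hη.1) hh])
    (fun _ _ => measureReal_nonneg)
    ((monotoneOn_R0_sub hrr (x + h)).mono (Icc_subset_Icc zero_le_one hcT)) hR₀
    fun s hs => hP s ⟨hs.1, hs.2.trans hTx⟩
  calc probTerm F A η x
      = x / A x * ∫ s in (1 : ℝ)..η * x, A s ^ 2 / s ^ 2 * F.real (Ioc (x - s) x) := rfl
    _ ≤ K * ((x + h) / A (x + h)) * (4 * K / (h * (x + h) * A (x + h)) * (1 + 2 * h) *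
          ∫ t in (1 : ℝ)..(1 + 2 * h) * η * (x + h),
            A t ^ 2 / t ^ 2 * R0 F h (x + h - t) (x + h)) :=
        mul_le_mul hratio hI (intervalIntegral.integral_nonneg hT fun _ _ =>
          mul_nonneg (by positivity) measureReal_nonneg) (by positivity)
    _ = 4 * K ^ 2 * (1 + 2 * h) / h * starStarTerm F A h ((1 + 2 * h) * η) (x + h) := by
        rw [starStarTerm]
        field_simp

end Terms

theorem condStarStar_iff_prob_form_general
    (F : Measure ℝ) [IsProbabilityMeasure F]
    (α : ℝ)
    (A : ℝ → ℝ)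
    (hApos : ∀ x : ℝ, 0 ≤ x → 0 < A x)
    (hAcont : ContinuousOn A (Set.Ici 0))
    (hAmono : StrictMonoOn A (Set.Ici 0))
    (hAreg : ∀ l : ℝ, 0 < l →
      Tendsto (fun x : ℝ => A (l * x) / A x) atTop (nhds (l ^ α)))
    (hT1 : (fun x : ℝ => (F (Set.Ioi x)).toReal) ~[atTop] fun x : ℝ => 1 / A x)
    (h : ℝ) (hh : 0 < h)
    :
    CondStarStar F A h ↔
      Tendsto (fun η : ℝ =>
          limsup (fun x : ℝ => x / A x *
            ∫ s in (1:ℝ)..(η * x), (A s) ^ 2 / s ^ 2 * (F (Set.Ioc (x - s) x)).toReal)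
            atTop)
        (nhdsWithin 0 (Set.Ioi 0)) (nhds 0) := by
  have hAG := eventually_mul_measureReal_Ioi_mem_Icc hApos hT1
  have hrr := intervalIntegrable_rr hh.le (measureReal_Ioi_pos hAG)
  have hdouble : ∀ᶠ x in atTop, A (2 * x) ≤ (2 ^ α + 1) * A x :=
    eventually_le_add_one_mul_of_tendsto_div ((eventually_ge_atTop 0).mono hApos) (hAreg 2 two_pos)
  have hSP := eventually_starStarTerm_le_probTerm hh.le hApos hAmono.monotoneOn hAcont hAG
  have hPS := eventually_probTerm_le_starStarTerm hh hApos hAmono.monotoneOn hAcont hAG hrr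
    (by positivity) hdouble
  have hshift : Tendsto (fun x : ℝ => x + h) atTop atTop :=
    tendsto_atTop_add_const_right _ h tendsto_id
  constructor
  · exact tendsto_limsup_of_le_mul_comp (Φ := probTerm F A) (Ψ := starStarTerm F A h)
      (by positivity) (by positivity) (by positivity) (by positivity) one_pos hshift tendsto_id
      (eventually_probTerm_nonneg hApos) eventually_starStarTerm_nonneg
      (fun _ _ => starStarTerm_mono hAcont hrr) hPS hSP
  · exact tendsto_limsup_of_le_mul_comp (Φ := starStarTerm F A h) (Ψ := probTerm F A)
      (by positivity) (by positivity) (by positivity) (by positivity) one_pos tendsto_id hshift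
      eventually_starStarTerm_nonneg (eventually_probTerm_nonneg hApos)
      (fun _ _ h₁ h₁₂ _ => probTerm_mono hApos hAcont h₁ h₁₂) hSP hPS

/-- **Lemma 3.1 (second part)**: under (T1), condition (★★) is equivalent to its
reformulation in terms of `P(X ∈ (x−s, x])`. -/
theorem condStarStar_iff_prob_form
    (F : Measure ℝ) [IsProbabilityMeasure F]
    (hFsupp : F (Set.Iio 0) = 0)
    (α : ℝ) (hα1 : 0 < α) (hα2 : α < 1)
    (A : ℝ → ℝ)
    (hApos : ∀ x : ℝ, 0 ≤ x → 0 < A x)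
    (hAcont : ContinuousOn A (Set.Ici 0))
    (hAmono : StrictMonoOn A (Set.Ici 0))
    (hAreg : ∀ l : ℝ, 0 < l →
      Tendsto (fun x : ℝ => A (l * x) / A x) atTop (nhds (l ^ α)))
    (hT1 : (fun x : ℝ => (F (Set.Ioi x)).toReal) ~[atTop] fun x : ℝ => 1 / A x)
    (h : ℝ) (hh : 0 < h)
    (hspan : (∃ t, IsArithSpan F t) → IsGreatest {t | IsArithSpan F t} h)
    :
    CondStarStar F A h ↔
      Tendsto (fun η : ℝ =>
          limsup (fun x : ℝ => x / A x *
            ∫ s in (1:ℝ)..(η * x), (A s) ^ 2 / s ^ 2 * (F (Set.Ioc (x - s) x)).toReal)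
            atTop)
        (nhdsWithin 0 (Set.Ioi 0)) (nhds 0) :=
  condStarStar_iff_prob_form_general F α A hApos hAcont hAmono hAreg hT1 h hh
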